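/- Let E, M : F → ℝ with M ≥ 0, E bounded below, and let c = inf { E f : f ∈ F, M f = 0 } (assumed attained or finite). Suppose for every ε > 0 there is δ(ε) > 0 with δ(ε) → 0 as ε → 0, such that for every f with M f ≤ ε there exists f̂ with M f̂ = 0 and E f̂ ≤ E f + δ(ε). Then L(λ) = inf_f (E f + λ M f) converges to c as λ → ∞. -/

import Mathlib

/-!
Every feasible `f` gives `E f + λ M f = E f`, so `L(λ) ≤ c`. Conversely, fix `ε > 0`: a point with
`M f ≤ ε` is repaired at cost `δ ε`, so `E f + λ M f ≥ c - δ ε`, while a point with `M f > ε`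
has `E f + λ M f ≥ b + λ ε ≥ c` once `λ ≥ (c - b) / ε`. Letting `ε → 0` closes the gap.
-/

open Filter

section Penalty

variable {F : Type*} (E M : F → ℝ)

lemma bddBelow_range_add_mul {b l : ℝ} (hM : ∀ f, 0 ≤ M f) (hE : ∀ f, b ≤ E f) (hl : 0 ≤ l) :
    BddBelow (Set.range fun f => E f + l * M f) :=
  ⟨b, by rintro _ ⟨f, rfl⟩; exact le_add_of_le_of_nonneg (hE f) (mul_nonneg hl (hM f))⟩

lemma ciInf_add_mul_le_of_isGLB {c l : ℝ} (hbdd : BddBelow (Set.range fun f => E f + l * M f))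
    (hc : IsGLB {e | ∃ f, M f = 0 ∧ E f = e} c) : ⨅ f, E f + l * M f ≤ c :=
  hc.2 <| by
    rintro _ ⟨f, hf, rfl⟩
    simpa only [hf, mul_zero, add_zero] using ciInf_le hbdd f

lemma sub_le_add_mul_of_repair {b c d ε l : ℝ} (hM : ∀ f, 0 ≤ M f) (hE : ∀ f, b ≤ E f)
    (hc : c ∈ lowerBounds {e | ∃ f, M f = 0 ∧ E f = e}) (hd : 0 ≤ d) (hε : 0 < ε)
    (hrepair : ∀ f, M f ≤ ε → ∃ fhat, M fhat = 0 ∧ E fhat ≤ E f + d)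
    (hl0 : 0 ≤ l) (hl : (c - b) / ε ≤ l) (f : F) : c - d ≤ E f + l * M f := by
  rcases le_or_gt (M f) ε with hsmall | hlarge
  · obtain ⟨fhat, hfeasible, hcost⟩ := hrepair f hsmall
    have hcle : c ≤ E fhat := hc ⟨fhat, hfeasible, rfl⟩
    linarith [mul_nonneg hl0 (hM f)]
  · have hgap : c - b ≤ l * ε := (div_le_iff₀ hε).1 hl
    have hpenalty : l * ε ≤ l * M f := mul_le_mul_of_nonneg_left hlarge.le hl0
    linarith [hE f]

end Penalty

/-- Abstract convergence of the penalized objective to the constrained optimum: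
if near-feasible points (`M f ≤ ε`) can be repaired to feasible points (`M f̂ = 0`)
at an energy cost `δ ε` which tends to `0` as `ε → 0`, then
`L(λ) = ⨅ f, (E f + λ * M f)` converges to `c = inf {E f | M f = 0}` as `λ → ∞`. -/
theorem penalized_inf_tendsto_constrained {F : Type*} [Nonempty F]
    (E M : F → ℝ) (b c : ℝ)
    (hM : ∀ f, 0 ≤ M f) (hE : ∀ f, b ≤ E f)
    (hc : IsGLB {e : ℝ | ∃ f, M f = 0 ∧ E f = e} c)
    (δ : ℝ → ℝ) (hδpos : ∀ ε > 0, 0 < δ ε)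
    (hδ0 : Tendsto δ (nhdsWithin 0 (Set.Ioi 0)) (nhds 0))
    (hrepair : ∀ ε > 0, ∀ f, M f ≤ ε → ∃ fhat, M fhat = 0 ∧ E fhat ≤ E f + δ ε) :
    Tendsto (fun l : ℝ => ⨅ f, E f + l * M f) atTop (nhds c) := by
  refine tendsto_order.2 ⟨fun a ha => ?_, fun a ha => ?_⟩
  · obtain ⟨ε, hδε, hε⟩ : ∃ ε, δ ε < c - a ∧ 0 < ε :=
      ((hδ0.eventually (gt_mem_nhds (sub_pos.2 ha))).and self_mem_nhdsWithin).exists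
    filter_upwards [eventually_ge_atTop (max 0 ((c - b) / ε))] with l hl
    calc a < c - δ ε := by linarith
      _ ≤ ⨅ f, E f + l * M f :=
        le_ciInf <| sub_le_add_mul_of_repair E M hM hE hc.1 (hδpos ε hε).le hε
          (hrepair ε hε) (le_of_max_le_left hl) (le_of_max_le_right hl)
  · filter_upwards [eventually_ge_atTop 0] with l hl
    exact (ciInf_add_mul_le_of_isGLB E M (bddBelow_range_add_mul E M hM hE hl) hc).trans_lt ha
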